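/- Let S = ℝ[x,y,z], let m̂ = ⟨x,y⟩ ⊆ S, and let ℓ_1,...,ℓ_k be linear forms in the variables x,y only (i.e., elements of degree 1 in ⟨x,y⟩). Then for any integers 0 ≤ r ≤ s, the equality Σ_{j=1}^{k} (m̂^{s+1} ∩ ⟨ℓ_j^{r+1}⟩) = m̂^{s+1} ∩ Σ_{j=1}^{k} ⟨ℓ_j^{r+1}⟩ holds as ideals of S. -/
import Mathlib


open MvPolynomial

noncomputable section

/-- `S = ℝ[x,y,z]`. -/
abbrev S3 := MvPolynomial (Fin 3) ℝ

namespace Stmt3Aux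

/-- weight: x,y have weight 1, z has weight 0 -/
def w : Fin 3 → ℕ := fun i => if i = 2 then 0 else 1

abbrev Gr : ℕ → Submodule ℝ S3 := weightedHomogeneousSubmodule ℝ w

instance : GradedAlgebra Gr := weightedGradedAlgebra ℝ w

abbrev J : Ideal S3 := Ideal.span {X 0, X 1}

lemma weight_eq (d : Fin 3 →₀ ℕ) : Finsupp.weight w d = d 0 + d 1 := by
  simp [Finsupp.weight_apply, Finsupp.sum_fintype, Fin.sum_univ_three, w]

lemma decompose_coe (φ : S3) (m : ℕ) :
    (DirectSum.decompose Gr φ m : S3) = weightedHomogeneousComponent w m φ :=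
  MvPolynomial.decompose'_apply ℝ w φ m

/-- The set of polynomials all of whose monomials have x,y-degree ≥ t, as an ideal. -/
def Mdeg (t : ℕ) : Ideal S3 where
  carrier := {f | ∀ d ∈ f.support, t ≤ d 0 + d 1}
  zero_mem' := by simp
  add_mem' := by
    intro a b ha hb d hd
    rcases Finset.mem_union.1 (MvPolynomial.support_add hd) with h | h
    · exact ha d h
    · exact hb d h
  smul_mem' := by
    intro c f hf d hd
    rw [smul_eq_mul] at hd
    have := MvPolynomial.support_mul c f hd
    rw [Finset.mem_add] at this
    obtain ⟨y, hy, z, hz, rfl⟩ := this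
    have := hf z hz
    simp only [Finsupp.add_apply]
    omega

lemma mem_Mdeg {t : ℕ} {f : S3} : f ∈ Mdeg t ↔ ∀ d ∈ f.support, t ≤ d 0 + d 1 := Iff.rfl

lemma Mdeg_mul (a b : ℕ) : Mdeg a * Mdeg b ≤ Mdeg (a + b) := by
  rw [Ideal.mul_le]
  intro p hp q hq d hd
  have := MvPolynomial.support_mul p q hd
  rw [Finset.mem_add] at this
  obtain ⟨y, hy, z, hz, rfl⟩ := this
  have h1 := hp y hy
  have h2 := hq z hz
  simp only [Finsupp.add_apply]
  omega

lemma J_le_Mdeg1 : J ≤ Mdeg 1 := by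
  rw [Ideal.span_le]
  rintro p (rfl | rfl) <;>
  · intro d hd
    rw [MvPolynomial.support_X] at hd
    rw [Finset.mem_singleton] at hd
    subst hd
    simp [Finsupp.single_apply]

lemma pow_le_Mdeg (t : ℕ) : J ^ t ≤ Mdeg t := by
  induction t with
  | zero => intro f _; simp [mem_Mdeg]
  | succ t ih =>
    calc J ^ (t + 1) = J ^ t * J := by rw [pow_succ]
    _ ≤ Mdeg t * Mdeg 1 := Ideal.mul_mono ih J_le_Mdeg1
    _ ≤ Mdeg (t + 1) := Mdeg_mul t 1

lemma monomial_mem_pow (t : ℕ) : ∀ (d : Fin 3 →₀ ℕ) (c : ℝ), t ≤ d 0 + d 1 →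
    MvPolynomial.monomial d c ∈ J ^ t := by
  induction t with
  | zero => intro d c _; simp
  | succ t ih =>
    intro d c hd
    have key : ∀ i : Fin 3, X i ∈ J → 1 ≤ d i →
        t ≤ (d - Finsupp.single i 1 : Fin 3 →₀ ℕ) 0 + (d - Finsupp.single i 1 : Fin 3 →₀ ℕ) 1 →
        MvPolynomial.monomial d c ∈ J ^ (t + 1) := by
      intro i hXi hdi hdeg
      have hsum : (d - Finsupp.single i 1) + Finsupp.single i 1 = d := by
        ext a
        rw [Finsupp.add_apply, Finsupp.tsub_apply, Finsupp.single_apply]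
        by_cases ha : i = a
        · rw [if_pos ha]
          subst ha
          omega
        · rw [if_neg ha]
          omega
      have heq : MvPolynomial.monomial (d - Finsupp.single i 1) c * X i
          = MvPolynomial.monomial d c := by
        rw [MvPolynomial.X, MvPolynomial.monomial_mul, mul_one, hsum]
      rw [← heq, pow_succ]
      exact Ideal.mul_mem_mul (ih _ c hdeg) hXi
    have hX0 : X (0 : Fin 3) ∈ J := Ideal.subset_span (by simp)
    have hX1 : X (1 : Fin 3) ∈ J := Ideal.subset_span (by simp)
    by_cases h0 : 1 ≤ d 0
    · refine key 0 hX0 h0 ?_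
      simp [Finsupp.tsub_apply, Finsupp.single_apply]
      omega
    · refine key 1 hX1 (by omega) ?_
      simp [Finsupp.tsub_apply, Finsupp.single_apply]
      omega

lemma mem_pow_iff {t : ℕ} {f : S3} :
    f ∈ J ^ t ↔ ∀ d ∈ f.support, t ≤ d 0 + d 1 := by
  constructor
  · exact fun h => pow_le_Mdeg t h
  · intro h
    rw [MvPolynomial.as_sum f]
    exact Ideal.sum_mem _ fun d hd => monomial_mem_pow t d _ (h d hd)

/-- representation of membership in a finite sum of ideals -/
lemma mem_sum_ideal {ι : Type*} [DecidableEq ι] (t : Finset ι) (I : ι → Ideal S3) (x : S3)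
    (hx : x ∈ ∑ j ∈ t, I j) : ∃ b : ι → S3, (∀ j ∈ t, b j ∈ I j) ∧ x = ∑ j ∈ t, b j := by
  induction t using Finset.induction_on generalizing x with
  | empty =>
    refine ⟨0, by simp, ?_⟩
    simpa using hx
  | @insert a t' ha ih =>
    rw [Finset.sum_insert ha, Submodule.add_eq_sup, Submodule.mem_sup] at hx
    obtain ⟨y, hy, z, hz, rfl⟩ := hx
    obtain ⟨b, hb, rfl⟩ := ih z hz
    refine ⟨Function.update b a y, ?_, ?_⟩
    · intro j hj
      rcases Finset.mem_insert.1 hj with rfl | hj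
      · simpa using hy
      · rw [Function.update_of_ne (ne_of_mem_of_not_mem hj ha)]
        exact hb j hj
    · rw [Finset.sum_insert ha, Function.update_self]
      congr 1
      exact Finset.sum_congr rfl fun j hj =>
        (Function.update_of_ne (ne_of_mem_of_not_mem hj ha) _ _).symm

end Stmt3Aux

open Stmt3Aux in
/-- For `m̂ = ⟨x,y⟩ ⊆ S = ℝ[x,y,z]` and nonzero linear forms `ℓ_1,…,ℓ_k` in the variables
`x,y` only, and integers `0 ≤ r ≤ s`:
`Σ_j (m̂^{s+1} ∩ ⟨ℓ_j^{r+1}⟩) = m̂^{s+1} ∩ Σ_j ⟨ℓ_j^{r+1}⟩`. -/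
theorem stmt3 (k : ℕ) (ℓ : Fin k → S3)
    (hmem : ∀ j, ℓ j ∈ Submodule.span ℝ ({X 0, X 1} : Set S3))
    (hne : ∀ j, ℓ j ≠ 0)
    (r s : ℕ) (hrs : r ≤ s) :
    (∑ j : Fin k, ((Ideal.span {X 0, X 1} : Ideal S3) ^ (s + 1) ⊓ Ideal.span {ℓ j ^ (r + 1)}))
      = (Ideal.span {X 0, X 1} : Ideal S3) ^ (s + 1) ⊓
          ∑ j : Fin k, Ideal.span {ℓ j ^ (r + 1)} := by
  -- each ⟨ℓ j ^ (r+1)⟩ is homogeneous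
  have hℓhom : ∀ j, ℓ j ∈ Gr 1 := by
    intro j
    apply Submodule.span_le.2 _ (hmem j)
    rintro p (rfl | rfl)
    · rw [SetLike.mem_coe, mem_weightedHomogeneousSubmodule]
      have h := isWeightedHomogeneous_X ℝ w (0 : Fin 3)
      simpa [w] using h
    · rw [SetLike.mem_coe, mem_weightedHomogeneousSubmodule]
      have h := isWeightedHomogeneous_X ℝ w (1 : Fin 3)
      simpa [w] using h
  have hBhom : ∀ j, (Ideal.span {ℓ j ^ (r + 1)} : Ideal S3).IsHomogeneous Gr := by
    intro j
    apply Ideal.homogeneous_span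
    rintro x (rfl : x = ℓ j ^ (r + 1))
    exact ⟨r + 1, by simpa using SetLike.pow_mem_graded (r + 1) (hℓhom j)⟩
  apply le_antisymm
  · -- easy direction
    rw [Ideal.sum_eq_sup, Finset.sup_le_iff]
    intro j _
    refine le_inf inf_le_left (le_trans inf_le_right ?_)
    rw [Ideal.sum_eq_sup]
    exact Finset.le_sup (f := fun j => (Ideal.span {ℓ j ^ (r + 1)} : Ideal S3))
      (Finset.mem_univ j)
  · intro f hf
    rw [Submodule.mem_inf] at hf
    obtain ⟨hfA, hfS⟩ := hf
    obtain ⟨b, hb, rfl⟩ := mem_sum_ideal Finset.univ _ f hfS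
    -- truncation at degree ≤ s
    set T : S3 → S3 := fun g => ∑ d ∈ Finset.range (s + 1), weightedHomogeneousComponent w d g
      with hT
    have hTmem : ∀ j, T (b j) ∈ Ideal.span {ℓ j ^ (r + 1)} := fun j =>
      Ideal.sum_mem _ fun d _ => by
        rw [← decompose_coe]
        exact hBhom j d (hb j (Finset.mem_univ j))
    have hcoeff : ∀ (g : S3) (e : Fin 3 →₀ ℕ), e 0 + e 1 ≤ s →
        MvPolynomial.coeff e (T g) = MvPolynomial.coeff e g := by
      intro g e he
      rw [hT]
      simp only [MvPolynomial.coeff_sum, coeff_weightedHomogeneousComponent]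
      rw [Finset.sum_ite_eq (Finset.range (s + 1)) (Finsupp.weight w e), if_pos]
      rw [Finset.mem_range, weight_eq]
      omega
    have hhigh : ∀ g : S3, g - T g ∈ (J : Ideal S3) ^ (s + 1) := by
      intro g
      rw [mem_pow_iff]
      intro e he
      by_contra hlt
      push_neg at hlt
      rw [MvPolynomial.mem_support_iff] at he
      exact he (by rw [MvPolynomial.coeff_sub, hcoeff g e (by omega), sub_self])
    -- T is additive over the sum
    have hTsum : T (∑ j, b j) = ∑ j, T (b j) := by
      rw [hT]
      simp only [map_sum]
      exact Finset.sum_comm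
    -- T of f is zero, since f ∈ m^(s+1)
    have hTf : T (∑ j, b j) = 0 := by
      have hcoe : ∀ e : Fin 3 →₀ ℕ, e 0 + e 1 ≤ s →
          ∑ x : Fin k, MvPolynomial.coeff e (b x) = 0 := by
        intro e he
        rw [← MvPolynomial.coeff_sum]
        by_contra hne'
        have := (mem_pow_iff.1 hfA) e (MvPolynomial.mem_support_iff.2 hne')
        omega
      apply MvPolynomial.ext
      intro e
      rw [MvPolynomial.coeff_zero, hT]
      simp only [MvPolynomial.coeff_sum, coeff_weightedHomogeneousComponent]
      rw [Finset.sum_ite_eq (Finset.range (s + 1)) (Finsupp.weight w e)]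
      split
      · rename_i h
        rw [Finset.mem_range, weight_eq] at h
        exact hcoe e (by omega)
      · rfl
    have key : (∑ j, b j) = ∑ j, (b j - T (b j)) := by
      rw [Finset.sum_sub_distrib, ← hTsum, hTf, sub_zero]
    rw [key]
    refine Ideal.sum_mem _ fun j _ => ?_
    have hj : b j - T (b j) ∈ (Ideal.span {X 0, X 1} : Ideal S3) ^ (s + 1)
        ⊓ Ideal.span {ℓ j ^ (r + 1)} :=
      ⟨hhigh (b j), sub_mem (hb j (Finset.mem_univ j)) (hTmem j)⟩
    have hle : (Ideal.span {X 0, X 1} : Ideal S3) ^ (s + 1) ⊓ Ideal.span {ℓ j ^ (r + 1)}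
        ≤ ∑ j' : Fin k, ((Ideal.span {X 0, X 1} : Ideal S3) ^ (s + 1)
            ⊓ Ideal.span {ℓ j' ^ (r + 1)}) := by
      rw [Ideal.sum_eq_sup]
      exact Finset.le_sup (f := fun j' => (Ideal.span {X 0, X 1} : Ideal S3) ^ (s + 1)
        ⊓ (Ideal.span {ℓ j' ^ (r + 1)} : Ideal S3)) (Finset.mem_univ j)
    exact hle hj
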